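/- arXiv:1806.00937 — 3 statements merged into one kernel-verified Lean document; each statement's English description precedes it below -/
import Mathlib

section
/- Let X, S, N be independent zero-mean Gaussians with variances P, Q, 1 (P, Q > 0). Set U = X + αS with α = P/(P+1), and Y = X + S + N. Then I(U; Y) − I(U; S) = (1/2)·log(1+P). -/
/-- Mutual information of two jointly Gaussian (zero-mean) real variables with variances
`vA`, `vB` and covariance `c` (logarithm base 2). -/
noncomputable def gaussMI (vA vB c : ℝ) : ℝ :=
  (1 / 2) * Real.logb 2 (vA * vB / (vA * vB - c ^ 2))

/-- Costa's dirty paper coding identity: for independent zero-mean Gaussians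
`X, S, N` with variances `P, Q, 1`, `U = X + αS` with `α = P/(P+1)`, `Y = X + S + N`,
one has `I(U;Y) - I(U;S) = (1/2)log(1+P)`. -/
theorem stmt3 (P Q : ℝ) (hP : 0 < P) (hQ : 0 < Q) :
    let α := P / (P + 1)
    gaussMI (P + α ^ 2 * Q) (P + Q + 1) (P + α * Q)
      - gaussMI (P + α ^ 2 * Q) Q (α * Q)
      = (1 / 2) * Real.logb 2 (1 + P) := by
  intro α
  have hP1 : (0:ℝ) < P + 1 := by linarith
  have hα : α = P / (P + 1) := rfl
  have hvU : 0 < P + α ^ 2 * Q := by positivity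
  have hB : (P + α ^ 2 * Q) * Q - (α * Q) ^ 2 = P * Q := by
    ring
  have hA : (P + α ^ 2 * Q) * (P + Q + 1) - (P + α * Q) ^ 2
      = P * (P + Q + 1) / (P + 1) := by
    rw [hα]; field_simp; ring
  unfold gaussMI
  rw [hA, hB]
  have hBval : (P + α ^ 2 * Q) * Q / (P * Q) = (P + α ^ 2 * Q) / P := by
    rw [mul_div_mul_right _ _ (ne_of_gt hQ)]
  have hAval : (P + α ^ 2 * Q) * (P + Q + 1) / (P * (P + Q + 1) / (P + 1))
      = (1 + P) * ((P + α ^ 2 * Q) / P) := by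
    have h1 : (0:ℝ) < P + Q + 1 := by linarith
    field_simp
    ring
  rw [hBval, hAval, Real.logb_mul (by positivity) (by positivity)]
  ring
end

section
/- Let X1', X1'', X2, S1, N1 be independent zero-mean Gaussians with variances P1', P1'', P2, Q1, 1. With D = P1+a²P2+1 (P1 = P1'+P1''), set U1 = X1' + α1S1 where α1 = P1'/D, and Y1 = X1' + X1'' + aX2 + S1 + N1. Then I(U1; Y1) − I(U1; S1) = (1/2)log(1 + P1'/(a²P2 + P1'' + 1)). -/
/-!
Costa's "writing on dirty paper" computation, with input power `P = P1'`, known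
interference `S1` of power `Q = Q1`, and unknown noise `N = P1'' + a²P2 + 1` (the second layer,
the other user and the channel noise). Both mutual informations are `½ log` of a ratio of
variances to a Gram determinant; for `U = X + αS` the determinant of `(U, S)` is `PQ` whatever
`α`, and for Costa's `α = P/(P+N)` the determinant of `(U, Y)` is `PN(P+N+Q)/(P+N)`.
Everything but `(P+N)/N` then cancels in the difference.
-/

open Real

lemma gaussMI_sub_gaussMI {v w w' c c' : ℝ} (hv : 0 < v) (hw : 0 < w) (hw' : 0 < w')
    (hc : 0 < v * w - c ^ 2) (hc' : 0 < v * w' - c' ^ 2) :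
    gaussMI v w c - gaussMI v w' c'
      = 1 / 2 * logb 2 (w * (v * w' - c' ^ 2) / (w' * (v * w - c ^ 2))) := by
  unfold gaussMI
  rw [← mul_sub, ← logb_div (by positivity) (by positivity)]
  congr 2
  field_simp

lemma dirtyPaper_gram_state (P Q α : ℝ) : (P + α ^ 2 * Q) * Q - (α * Q) ^ 2 = P * Q := by
  ring

lemma dirtyPaper_gram_output {P Q N : ℝ} (hPN : P + N ≠ 0) :
    (P + (P / (P + N)) ^ 2 * Q) * (P + Q + N) - (P + P / (P + N) * Q) ^ 2
      = P * N * (P + N + Q) / (P + N) := by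
  field_simp
  ring

theorem dirtyPaper_rate {P Q N : ℝ} (hP : 0 < P) (hQ : 0 < Q) (hN : 0 < N) :
    gaussMI (P + (P / (P + N)) ^ 2 * Q) (P + Q + N) (P + P / (P + N) * Q)
      - gaussMI (P + (P / (P + N)) ^ 2 * Q) Q (P / (P + N) * Q)
      = 1 / 2 * logb 2 (1 + P / N) := by
  have hPN : 0 < P + N := by positivity
  have hdet : 0 < P * N * (P + N + Q) / (P + N) := by positivity
  rw [gaussMI_sub_gaussMI (by positivity) (by positivity) hQ
      (by rwa [dirtyPaper_gram_output hPN.ne']) (by rw [dirtyPaper_gram_state]; positivity),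
    dirtyPaper_gram_output hPN.ne', dirtyPaper_gram_state]
  congr 2
  field_simp
  ring

/-- first layer of the layered dirty paper coding scheme:
with `U1 = X1' + α1 S1`, `α1 = P1'/(P1+a²P2+1)` and
`Y1 = X1' + X1'' + aX2 + S1 + N1`, one has
`I(U1;Y1) - I(U1;S1) = (1/2)log(1 + P1'/(a²P2+P1''+1))`. -/
theorem stmt8 (P1 P1' P1'' P2 Q1 a : ℝ)
    (hP1' : 0 < P1') (hP1'' : 0 < P1'') (hP2 : 0 < P2) (hQ1 : 0 < Q1)
    (hsplit : P1 = P1' + P1'') :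
    let D := P1 + a ^ 2 * P2 + 1
    let α1 := P1' / D
    gaussMI (P1' + α1 ^ 2 * Q1) (P1 + a ^ 2 * P2 + Q1 + 1) (P1' + α1 * Q1)
      - gaussMI (P1' + α1 ^ 2 * Q1) Q1 (α1 * Q1)
      = (1 / 2) * Real.logb 2 (1 + P1' / (a ^ 2 * P2 + P1'' + 1)) := by
  intro D α1
  have hD : D = P1' + (a ^ 2 * P2 + P1'' + 1) := by simp only [D, hsplit]; ring
  have hY : P1 + a ^ 2 * P2 + Q1 + 1 = P1' + Q1 + (a ^ 2 * P2 + P1'' + 1) := by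
    rw [hsplit]; ring
  simp only [α1, hD, hY]
  exact dirtyPaper_rate hP1' hQ1 (by positivity)
end

section
/- Let X, S, N be independent zero-mean Gaussians with variances P'', Q, 1, and let Y = X + λS + N for real λ. Set U = X + αS with α = λP''/(P''+1). Then I(U; Y) − I(U; S) = (1/2)log(1+P''). -/
theorem gaussMI_sub_gaussMI_of_ratio_eq {a b c a' b' c' k : ℝ} (hk : 0 < k)
    (h' : 0 < a' * b' / (a' * b' - c' ^ 2))
    (h : a * b / (a * b - c ^ 2) = k * (a' * b' / (a' * b' - c' ^ 2))) :
    gaussMI a b c - gaussMI a' b' c' = 1 / 2 * Real.logb 2 k := by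
  unfold gaussMI
  rw [h, Real.logb_mul hk.ne' h'.ne']
  ring

namespace Costa

variable (P Q lam α : ℝ)

theorem det_state : (P + α ^ 2 * Q) * Q - (α * Q) ^ 2 = P * Q := by ring

theorem det_output :
    (P + α ^ 2 * Q) * (P + lam ^ 2 * Q + 1) - (P + α * lam * Q) ^ 2
      = (P + α ^ 2 * Q) + P * Q * (lam - α) ^ 2 := by ring

variable {P Q lam α}

theorem var_output_mul_eq_one_add_mul_det_output (hα : (P + 1) * α = lam * P) :
    (P + lam ^ 2 * Q + 1) * P = (1 + P) * ((P + α ^ 2 * Q) + P * Q * (lam - α) ^ 2) := by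
  linear_combination Q * (lam * P - (P + 1) * α) * hα

theorem ratio_output_eq_mul_ratio_state (hP : 0 < P) (hQ : 0 < Q) (hα : (P + 1) * α = lam * P) :
    (P + α ^ 2 * Q) * (P + lam ^ 2 * Q + 1) / ((P + α ^ 2 * Q) * (P + lam ^ 2 * Q + 1)
        - (P + α * lam * Q) ^ 2)
      = (1 + P) * ((P + α ^ 2 * Q) * Q / ((P + α ^ 2 * Q) * Q - (α * Q) ^ 2)) := by
  have hdet : 0 < (P + α ^ 2 * Q) + P * Q * (lam - α) ^ 2 := by positivity
  rw [det_output, det_state, mul_div_assoc', div_eq_div_iff hdet.ne' (by positivity)]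
  linear_combination (P + α ^ 2 * Q) * Q * var_output_mul_eq_one_add_mul_det_output (Q := Q) hα

end Costa

/-- generalized Costa with scaled state: for independent zero-mean Gaussians
`X, S, N` with variances `P'', Q, 1`, `Y = X + λS + N`, `U = X + αS` with
`α = λP''/(P''+1)`, one has `I(U;Y) - I(U;S) = (1/2)log(1+P'')`. -/
theorem stmt10 (P'' Q lam : ℝ) (hP : 0 < P'') (hQ : 0 < Q) :
    let α := lam * P'' / (P'' + 1)
    gaussMI (P'' + α ^ 2 * Q) (P'' + lam ^ 2 * Q + 1) (P'' + α * lam * Q)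
      - gaussMI (P'' + α ^ 2 * Q) Q (α * Q)
      = (1 / 2) * Real.logb 2 (1 + P'') := by
  intro α
  have hα : (P'' + 1) * α = lam * P'' := mul_div_cancel₀ _ (by positivity)
  refine gaussMI_sub_gaussMI_of_ratio_eq (by positivity) ?_
    (Costa.ratio_output_eq_mul_ratio_state hP hQ hα)
  rw [Costa.det_state]
  positivity
end
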